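/- Let O ∈ ℝ², let ℓ be a line with O ∉ ℓ, let θ ∈ ℝ be not an integer multiple of π, and let ℓ' be the image of ℓ under rotation by θ about O. Let O_ℓ and O_{ℓ'} be the reflections of O across ℓ and across ℓ', and let d be the line through O_ℓ and O_{ℓ'}. Let M_ℓ and M_{ℓ'} be the feet of the perpendiculars from O to ℓ and to ℓ' respectively, and let V be the midpoint of M_ℓ and M_{ℓ'}. Then the line through M_ℓ and M_{ℓ'} meets the parabola {X ∈ ℝ² : dist(X, O) = dist(X, d)} in exactly one point, namely V (the vertex of the parabola). -/

import Mathlib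

/-! Reflecting `O` across a line gives `2M - O`, where `M` is the foot of the perpendicular, so
the directrix `d` is the image of the line `Mℓ Mℓ'` under the homothety of ratio 2 about `O`.
The rotation about `O` carries `Mℓ` to `Mℓ'`, so `O` is equidistant from `Mℓ` and `Mℓ'` and
`O - V` is orthogonal to `Mℓ Mℓ'`. Hence every point `X` of `Mℓ Mℓ'` lies at distance `|OV|` from
`d`, while `|XO|² = |OV|² + |XV|²` by Pythagoras; the two agree only for `X = V`. -/

open Real

noncomputable section

abbrev Pt := EuclideanSpace ℝ (Fin 2)

def pt (x y : ℝ) : Pt := (WithLp.equiv 2 _).symm ![x, y]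

/-- The affine line through two points `A` and `B`. -/
def lineThrough (A B : Pt) : Set Pt := {P | ∃ t : ℝ, P = A + t • (B - A)}

/-- Counterclockwise rotation by angle `θ` about the point `c`. -/
def rotAbout (θ : ℝ) (c p : Pt) : Pt :=
  pt (c 0 + Real.cos θ * (p 0 - c 0) - Real.sin θ * (p 1 - c 1))
     (c 1 + Real.sin θ * (p 0 - c 0) + Real.cos θ * (p 1 - c 1))

/-- Euclidean dot product of two vectors of ℝ². -/
def dot (u v : Pt) : ℝ := u 0 * v 0 + u 1 * v 1

/-- `X'` is the reflection of `X` across the line `m`. -/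
def IsReflection (m : Set Pt) (X X' : Pt) : Prop :=
  midpoint ℝ X X' ∈ m ∧ ∀ A ∈ m, ∀ B ∈ m, dot (X' - X) (B - A) = 0

/-- `M` is the foot of the perpendicular from `X` to the line `m`. -/
def IsFoot (m : Set Pt) (X M : Pt) : Prop :=
  M ∈ m ∧ ∀ A ∈ m, ∀ B ∈ m, dot (X - M) (B - A) = 0

open scoped InnerProductSpace

lemma dot_eq_inner (u v : Pt) : dot u v = ⟪u, v⟫_ℝ := by
  simp [dot, PiLp.inner_apply, Fin.sum_univ_two, mul_comm]

lemma eq_zero_of_eq_smul_of_inner_eq_zero {E : Type*} [NormedAddCommGroup E]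
    [InnerProductSpace ℝ E] {u v : E} {s : ℝ} (hu : u = s • v) (h : ⟪u, v⟫_ℝ = 0) : u = 0 := by
  rw [← inner_self_eq_zero (𝕜 := ℝ)]
  nth_rewrite 2 [hu]
  rw [inner_smul_right, h, mul_zero]

section lineThrough

variable {A B : Pt}

lemma left_mem_lineThrough (A B : Pt) : A ∈ lineThrough A B := ⟨0, by simp⟩

lemma right_mem_lineThrough (A B : Pt) : B ∈ lineThrough A B := ⟨1, by simp⟩

lemma exists_sub_eq_smul_of_mem_lineThrough {P Q : Pt} (hP : P ∈ lineThrough A B)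
    (hQ : Q ∈ lineThrough A B) : ∃ s : ℝ, Q - P = s • (B - A) := by
  obtain ⟨t, rfl⟩ := hP
  obtain ⟨u, rfl⟩ := hQ
  exact ⟨u - t, by module⟩

lemma midpoint_mem_lineThrough (A B : Pt) : midpoint ℝ A B ∈ lineThrough A B :=
  ⟨1 / 2, by rw [midpoint_eq_smul_add, invOf_eq_inv]; module⟩

lemma inner_sub_eq_zero_of_isFoot {X M P Q : Pt} (h : IsFoot (lineThrough A B) X M)
    (hP : P ∈ lineThrough A B) (hQ : Q ∈ lineThrough A B) : ⟪X - M, Q - P⟫_ℝ = 0 := by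
  rw [← dot_eq_inner]
  exact h.2 P hP Q hQ

lemma dist_sq_eq_dist_sq_add_dist_sq_of_mem_lineThrough {F P X : Pt}
    (hF : F ∈ lineThrough A B) (hP : P ∈ lineThrough A B) (h : ⟪X - F, B - A⟫_ℝ = 0) :
    dist P X ^ 2 = dist F X ^ 2 + dist P F ^ 2 := by
  obtain ⟨s, hs⟩ := exists_sub_eq_smul_of_mem_lineThrough hF hP
  have hperp : ⟪F - X, P - F⟫_ℝ = 0 := by
    rw [hs, inner_smul_right, ← neg_sub, inner_neg_left, h, neg_zero, mul_zero]
  have hpyth := norm_add_sq_eq_norm_sq_add_norm_sq_real hperp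
  rw [sub_add_sub_cancel'] at hpyth
  simpa only [dist_eq_norm, sq] using hpyth

lemma infDist_lineThrough_eq_dist {F X : Pt} (hF : F ∈ lineThrough A B)
    (h : ⟪X - F, B - A⟫_ℝ = 0) : Metric.infDist X (lineThrough A B) = dist X F := by
  refine le_antisymm (Metric.infDist_le_dist_of_mem hF) ((Metric.le_infDist ⟨F, hF⟩).2 ?_)
  intro Y hY
  rw [dist_comm X, dist_comm X, ← sq_le_sq₀ dist_nonneg dist_nonneg,
    dist_sq_eq_dist_sq_add_dist_sq_of_mem_lineThrough hF hY h]
  exact le_add_of_nonneg_right (sq_nonneg _)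

lemma IsFoot.unique {X M M' : Pt} (h : IsFoot (lineThrough A B) X M)
    (h' : IsFoot (lineThrough A B) X M') : M = M' := by
  obtain ⟨s, hs⟩ := exists_sub_eq_smul_of_mem_lineThrough h'.1 h.1
  have hperp : ⟪M - M', B - A⟫_ℝ = 0 := by
    rw [← sub_sub_sub_cancel_left M' M X, inner_sub_left,
      inner_sub_eq_zero_of_isFoot h (left_mem_lineThrough A B) (right_mem_lineThrough A B),
      inner_sub_eq_zero_of_isFoot h' (left_mem_lineThrough A B) (right_mem_lineThrough A B),
      sub_zero]
  exact sub_eq_zero.mp (eq_zero_of_eq_smul_of_inner_eq_zero hs hperp)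

end lineThrough

lemma IsReflection.isFoot_midpoint {m : Set Pt} {X X' : Pt} (h : IsReflection m X X') :
    IsFoot m X (midpoint ℝ X X') := by
  refine ⟨h.1, fun A hA B hB => ?_⟩
  have hX : X - midpoint ℝ X X' = (-2⁻¹ : ℝ) • (X' - X) := by
    rw [midpoint_eq_smul_add, invOf_eq_inv]; module
  rw [hX, dot_eq_inner, inner_smul_left, ← dot_eq_inner, h.2 A hA B hB, mul_zero]

lemma IsReflection.eq_of_isFoot {A B X X' M : Pt} (hR : IsReflection (lineThrough A B) X X')
    (hM : IsFoot (lineThrough A B) X M) : X' = M - X + M := by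
  have hM' := (midpoint_eq_iff' (R := ℝ)).mp (hR.isFoot_midpoint.unique hM)
  rw [← hM', Equiv.pointReflection_apply, vsub_eq_sub, vadd_eq_add]

section rotAbout

variable (θ : ℝ) (c : Pt)

@[simp]
lemma rotAbout_apply_zero (p : Pt) :
    rotAbout θ c p 0 = c 0 + cos θ * (p 0 - c 0) - sin θ * (p 1 - c 1) := rfl

@[simp]
lemma rotAbout_apply_one (p : Pt) :
    rotAbout θ c p 1 = c 1 + sin θ * (p 0 - c 0) + cos θ * (p 1 - c 1) := rfl

lemma rotAbout_self : rotAbout θ c c = c := by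
  ext i; fin_cases i <;> simp

lemma rotAbout_add_smul_sub (A B : Pt) (t : ℝ) :
    rotAbout θ c (A + t • (B - A)) = rotAbout θ c A + t • (rotAbout θ c B - rotAbout θ c A) := by
  ext i; fin_cases i <;> simp <;> ring

lemma image_rotAbout_lineThrough (A B : Pt) :
    rotAbout θ c '' lineThrough A B = lineThrough (rotAbout θ c A) (rotAbout θ c B) := by
  ext P
  constructor
  · rintro ⟨_, ⟨t, rfl⟩, rfl⟩
    exact ⟨t, rotAbout_add_smul_sub θ c A B t⟩
  · rintro ⟨t, rfl⟩
    exact ⟨_, ⟨t, rfl⟩, rotAbout_add_smul_sub θ c A B t⟩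

lemma dot_rotAbout_sub_rotAbout (P Q R S : Pt) :
    dot (rotAbout θ c P - rotAbout θ c Q) (rotAbout θ c R - rotAbout θ c S) =
      dot (P - Q) (R - S) := by
  simp only [dot, PiLp.sub_apply, rotAbout_apply_zero, rotAbout_apply_one]
  linear_combination ((P 0 - Q 0) * (R 0 - S 0) + (P 1 - Q 1) * (R 1 - S 1)) *
    Real.sin_sq_add_cos_sq θ

lemma dist_rotAbout (P Q : Pt) : dist (rotAbout θ c P) (rotAbout θ c Q) = dist P Q := by
  rw [dist_eq_norm, dist_eq_norm, ← sq_eq_sq₀ (norm_nonneg _) (norm_nonneg _),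
    ← real_inner_self_eq_norm_sq, ← real_inner_self_eq_norm_sq, ← dot_eq_inner, ← dot_eq_inner,
    dot_rotAbout_sub_rotAbout]

lemma IsFoot.image_rotAbout {m : Set Pt} {X M : Pt} (h : IsFoot m X M) :
    IsFoot (rotAbout θ c '' m) (rotAbout θ c X) (rotAbout θ c M) := by
  refine ⟨Set.mem_image_of_mem _ h.1, ?_⟩
  rintro _ ⟨A, hA, rfl⟩ _ ⟨B, hB, rfl⟩
  rw [dot_rotAbout_sub_rotAbout]
  exact h.2 A hA B hB

end rotAbout

lemma inner_sub_midpoint_eq_zero_of_dist_eq {E : Type*} [NormedAddCommGroup E]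
    [InnerProductSpace ℝ E] {O M M' : E} (h : dist M O = dist M' O) :
    ⟪O - midpoint ℝ M M', M' - M⟫_ℝ = 0 := by
  have hkite := EuclideanGeometry.inner_vsub_vsub_of_dist_eq_of_dist_eq h
    (dist_left_midpoint_eq_dist_right_midpoint (𝕜 := ℝ) M M')
  rw [← neg_sub, inner_neg_left, ← vsub_eq_sub, ← vsub_eq_sub M', hkite, neg_zero]

lemma infDist_lineThrough_sub_add_eq_dist_midpoint {O M M' X : Pt} (hMM' : dist M O = dist M' O)
    (hX : X ∈ lineThrough M M') :
    Metric.infDist X (lineThrough (M - O + M) (M' - O + M')) = dist O (midpoint ℝ M M') := by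
  obtain ⟨t, rfl⟩ := hX
  have hdir : M' - O + M' - (M - O + M) = (2 : ℝ) • (M' - M) := by module
  rw [infDist_lineThrough_eq_dist (F := M + t • (M' - M) + (midpoint ℝ M M' - O))
    ⟨t / 2 + 1 / 4, ?_⟩ ?_, dist_eq_norm, dist_eq_norm]
  · congr 1; abel
  · rw [midpoint_eq_smul_add, invOf_eq_inv]; module
  · rw [hdir, inner_smul_right, sub_add_cancel_left, neg_sub,
      inner_sub_midpoint_eq_zero_of_dist_eq hMM', mul_zero]

lemma lineThrough_inter_parabola_eq_midpoint {O M M' : Pt} (hMM' : dist M O = dist M' O) :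
    lineThrough M M' ∩ {X | dist X O = Metric.infDist X (lineThrough (M - O + M) (M' - O + M'))} =
      {midpoint ℝ M M'} := by
  have hV := midpoint_mem_lineThrough M M'
  ext X
  simp only [Set.mem_inter_iff, Set.mem_ofPred_eq, Set.mem_singleton_iff]
  constructor
  · rintro ⟨hX, hXO⟩
    have hpyth := dist_sq_eq_dist_sq_add_dist_sq_of_mem_lineThrough hV hX
      (inner_sub_midpoint_eq_zero_of_dist_eq hMM')
    rw [hXO, infDist_lineThrough_sub_add_eq_dist_midpoint hMM' hX, dist_comm O] at hpyth
    exact dist_eq_zero.mp (pow_eq_zero_iff two_ne_zero |>.mp (by linarith))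
  · rintro rfl
    exact ⟨hV, by rw [infDist_lineThrough_sub_add_eq_dist_midpoint hMM' hV, dist_comm]⟩

theorem vertex_of_parabola_general
    (O A B : Pt)
    (θ : ℝ)
    (Oℓ Oℓ' : Pt)
    (h1 : IsReflection (lineThrough A B) O Oℓ)
    (h2 : IsReflection (rotAbout θ O '' lineThrough A B) O Oℓ')
    (Mℓ Mℓ' : Pt)
    (hM1 : IsFoot (lineThrough A B) O Mℓ)
    (hM2 : IsFoot (rotAbout θ O '' lineThrough A B) O Mℓ') :
    lineThrough Mℓ Mℓ' ∩
        {X : Pt | dist X O = Metric.infDist X (lineThrough Oℓ Oℓ')} =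
      {midpoint ℝ Mℓ Mℓ'} := by
  have hM1' := hM1.image_rotAbout θ O
  rw [rotAbout_self] at hM1'
  rw [image_rotAbout_lineThrough] at h2 hM2 hM1'
  have hMℓ' : Mℓ' = rotAbout θ O Mℓ := hM2.unique hM1'
  have hdist : dist Mℓ O = dist Mℓ' O := by
    rw [hMℓ', ← dist_rotAbout θ O Mℓ O, rotAbout_self]
  rw [h1.eq_of_isFoot hM1, h2.eq_of_isFoot hM2]
  exact lineThrough_inter_parabola_eq_midpoint hdist

theorem vertex_of_parabola
    (O A B : Pt) (hAB : A ≠ B) (hO : O ∉ lineThrough A B)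
    (θ : ℝ) (hθ : ∀ n : ℤ, θ ≠ n * π)
    (Oℓ Oℓ' : Pt)
    (h1 : IsReflection (lineThrough A B) O Oℓ)
    (h2 : IsReflection (rotAbout θ O '' lineThrough A B) O Oℓ')
    (Mℓ Mℓ' : Pt)
    (hM1 : IsFoot (lineThrough A B) O Mℓ)
    (hM2 : IsFoot (rotAbout θ O '' lineThrough A B) O Mℓ') :
    lineThrough Mℓ Mℓ' ∩
        {X : Pt | dist X O = Metric.infDist X (lineThrough Oℓ Oℓ')} =
      {midpoint ℝ Mℓ Mℓ'} :=
  vertex_of_parabola_general O A B θ Oℓ Oℓ' h1 h2 Mℓ Mℓ' hM1 hM2
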